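/- Uniform approximation error of the Fejér convolution: let f : ℝ^m → ℝ be L-periodic, (ε/4, η)-continuous with η/√m ≤ L/2, and satisfy |f(x)| ≤ B/2 for all x. Then for every positive integer Λ and every x ∈ 𝒳, |(f * F_Λ)(x) − f(x)| ≤ ε/4 + 4 B m² L² / (π² Λ η²). Consequently, if Λ ≥ 16 B m² L² / (π² η² ε), then sup_{x ∈ 𝒳} |(f * F_Λ)(x) − f(x)| ≤ ε/2. -/

import Mathlib

open scoped BigOperators
open Real MeasureTheory

/-- The inner exponential sum `∑ k = -n, …, n, e^{2πi k t / L}`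
(a one-dimensional Dirichlet kernel factor). -/
noncomputable def dirichletSum (L : ℝ) (n : ℕ) (t : ℝ) : ℂ :=
  ∑ k ∈ Finset.Icc (-(n : ℤ)) (n : ℤ),
    Complex.exp (2 * Real.pi * Complex.I * (k : ℂ) * (t : ℂ) / (L : ℂ))


lemma Icc_succ_eq (N : ℕ) :
    Finset.Icc (-(N+1:ℤ)) (N+1:ℤ) =
      insert (-(N+1:ℤ)) (insert ((N:ℤ)+1) (Finset.Icc (-(N:ℤ)) (N:ℤ))) := by
  ext k; simp [Finset.mem_Icc]; omega

lemma dirichlet_expand (u : ℂ) (hu : u ≠ 0) (N : ℕ) :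
    ∑ k ∈ Finset.Icc (-(N:ℤ)) (N:ℤ), u ^ k
      = (∑ j ∈ Finset.range N, (u ^ ((j:ℤ) - N) + u ^ ((N:ℤ) - j))) + 1 := by
  induction N with
  | zero => simp
  | succ N ih =>
    have h1 : ¬ (-(N+1:ℤ)) ∈ insert ((N:ℤ)+1) (Finset.Icc (-(N:ℤ)) (N:ℤ)) := by
      simp [Finset.mem_Icc]; omega
    have h2 : ¬ ((N:ℤ)+1) ∈ Finset.Icc (-(N:ℤ)) (N:ℤ) := by
      simp [Finset.mem_Icc]
    rw [show ((N+1:ℕ):ℤ) = (N:ℤ)+1 by push_cast; ring] at *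
    rw [show (-((N:ℤ)+1)) = -(N+1:ℤ) by ring]
    rw [Icc_succ_eq, Finset.sum_insert h1, Finset.sum_insert h2, ih]
    have hshift : ∑ j ∈ Finset.range (N+1), (u ^ ((j:ℤ) - ((N:ℤ)+1)) + u ^ (((N:ℤ)+1) - (j:ℤ)))
        = (∑ j ∈ Finset.range N, (u ^ ((j:ℤ) - (N:ℤ)) + u ^ ((N:ℤ) - (j:ℤ))))
          + (u ^ (-((N:ℤ)+1)) + u ^ ((N:ℤ)+1)) := by
      rw [Finset.sum_range_succ']
      congr 1
      apply Finset.sum_congr rfl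
      intro j _
      push_cast
      rw [show ((j:ℤ)+1) - ((N:ℤ)+1) = (j:ℤ) - N by ring,
          show ((N:ℤ)+1) - ((j:ℤ)+1) = (N:ℤ) - j by ring]
    push_cast
    rw [hshift]
    ring

lemma fejer_factor (u : ℂ) (hu : u ≠ 0) (N : ℕ) :
    ∑ n ∈ Finset.range N, ∑ k ∈ Finset.Icc (-(n:ℤ)) (n:ℤ), u ^ k
      = (∑ j ∈ Finset.range N, u ^ j) * (∑ j ∈ Finset.range N, u⁻¹ ^ j) := by
  induction N with
  | zero => simp
  | succ N ih =>
    rw [Finset.sum_range_succ, ih, Finset.sum_range_succ, Finset.sum_range_succ,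
      dirichlet_expand u hu]
    have key : ∀ j : ℕ, u ^ ((j:ℤ) - N) = u ^ j * u⁻¹ ^ N ∧ u ^ ((N:ℤ) - j) = u ^ N * u⁻¹ ^ j := by
      intro j
      constructor
      · rw [zpow_sub₀ hu, zpow_natCast, zpow_natCast, div_eq_mul_inv, inv_pow]
      · rw [zpow_sub₀ hu, zpow_natCast, zpow_natCast, div_eq_mul_inv, inv_pow]
    have hs : ∑ j ∈ Finset.range N, (u ^ ((j:ℤ) - N) + u ^ ((N:ℤ) - j))
        = (∑ j ∈ Finset.range N, u ^ j) * u⁻¹ ^ N + u ^ N * (∑ j ∈ Finset.range N, u⁻¹ ^ j) := by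
      rw [Finset.sum_add_distrib, Finset.sum_mul, Finset.mul_sum]
      exact congrArg₂ (· + ·) (Finset.sum_congr rfl fun j _ => (key j).1)
        (Finset.sum_congr rfl fun j _ => (key j).2)
    rw [hs]
    have h1 : u ^ N * u⁻¹ ^ N = 1 := by
      rw [inv_pow, mul_inv_cancel₀ (pow_ne_zero _ hu)]
    linear_combination -h1

noncomputable def gS (L : ℝ) (Λ : ℕ) (t : ℝ) : ℂ :=
  ∑ j ∈ Finset.range Λ, Complex.exp (2 * Real.pi * Complex.I * (t : ℂ) / (L : ℂ)) ^ j

noncomputable def g1 (L : ℝ) (Λ : ℕ) (t : ℝ) : ℝ := (Λ : ℝ)⁻¹ * Complex.normSq (gS L Λ t)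

lemma exp_zk (L t : ℝ) (k : ℤ) :
    Complex.exp (2 * Real.pi * Complex.I * (k : ℂ) * (t : ℂ) / (L : ℂ))
      = Complex.exp (2 * Real.pi * Complex.I * (t : ℂ) / (L : ℂ)) ^ k := by
  rw [← Complex.exp_int_mul]
  congr 1
  push_cast
  ring

lemma conj_gS (L : ℝ) (Λ : ℕ) (t : ℝ) :
    (starRingEnd ℂ) (gS L Λ t)
      = ∑ j ∈ Finset.range Λ, (Complex.exp (2 * Real.pi * Complex.I * (t : ℂ) / (L : ℂ)))⁻¹ ^ j := by
  rw [gS, map_sum]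
  apply Finset.sum_congr rfl
  intro j _
  rw [map_pow, ← Complex.exp_conj, ← Complex.exp_neg]
  congr 2
  simp [map_div₀, Complex.conj_I, map_ofNat]
  ring

lemma sum_dirichlet_eq (L : ℝ) (Λ : ℕ) (t : ℝ) :
    ∑ n ∈ Finset.range Λ, dirichletSum L n t = ((Complex.normSq (gS L Λ t) : ℝ) : ℂ) := by
  have hu : Complex.exp (2 * Real.pi * Complex.I * (t : ℂ) / (L : ℂ)) ≠ 0 :=
    Complex.exp_ne_zero _
  calc ∑ n ∈ Finset.range Λ, dirichletSum L n t
      = ∑ n ∈ Finset.range Λ, ∑ k ∈ Finset.Icc (-(n : ℤ)) (n : ℤ),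
          Complex.exp (2 * Real.pi * Complex.I * (t : ℂ) / (L : ℂ)) ^ k := by
        apply Finset.sum_congr rfl; intro n _
        rw [dirichletSum]
        exact Finset.sum_congr rfl fun k _ => exp_zk L t k
    _ = gS L Λ t * (starRingEnd ℂ) (gS L Λ t) := by
        rw [fejer_factor _ hu, conj_gS, gS]
    _ = _ := by rw [Complex.mul_conj]

lemma gS_cont (L : ℝ) (Λ : ℕ) : Continuous (gS L Λ) := by
  apply continuous_finset_sum
  intro j _
  exact (Complex.continuous_exp.comp (by fun_prop)).pow j

lemma g1_cont (L : ℝ) (Λ : ℕ) : Continuous (g1 L Λ) :=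
  continuous_const.mul (Complex.continuous_normSq.comp (gS_cont L Λ))

lemma g1_nonneg (L : ℝ) (Λ : ℕ) (t : ℝ) : 0 ≤ g1 L Λ t :=
  mul_nonneg (by positivity) (Complex.normSq_nonneg _)

lemma norm_exp_eq_one (L t : ℝ) :
    ‖Complex.exp (2 * Real.pi * Complex.I * (t : ℂ) / (L : ℂ))‖ = 1 := by
  rw [show 2 * (Real.pi : ℂ) * Complex.I * (t : ℂ) / (L : ℂ)
      = ((2 * Real.pi * t / L : ℝ) : ℂ) * Complex.I by push_cast; ring]
  exact Complex.norm_exp_ofReal_mul_I _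

lemma normSq_gS_le (L : ℝ) (Λ : ℕ) (t : ℝ) : Complex.normSq (gS L Λ t) ≤ (Λ : ℝ) ^ 2 := by
  have h : ‖gS L Λ t‖ ≤ (Λ : ℝ) := by
    calc ‖gS L Λ t‖ ≤ ∑ j ∈ Finset.range Λ, ‖Complex.exp (2 * Real.pi * Complex.I * (t : ℂ) / (L : ℂ)) ^ j‖ :=
          norm_sum_le _ _
      _ = ∑ j ∈ Finset.range Λ, (1 : ℝ) := by
          apply Finset.sum_congr rfl; intro j _
          rw [norm_pow, norm_exp_eq_one, one_pow]
      _ = (Λ : ℝ) := by simp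
  rw [Complex.normSq_eq_norm_sq]
  exact pow_le_pow_left₀ (norm_nonneg _) h 2

lemma g1_le (L : ℝ) (Λ : ℕ) (t : ℝ) : g1 L Λ t ≤ (Λ : ℝ) := by
  rcases Nat.eq_zero_or_pos Λ with h | h
  · simp [g1, h, gS]
  · rw [g1]
    have hΛ : (0:ℝ) < Λ := by exact_mod_cast h
    calc (Λ : ℝ)⁻¹ * Complex.normSq (gS L Λ t) ≤ (Λ : ℝ)⁻¹ * (Λ : ℝ)^2 :=
          mul_le_mul_of_nonneg_left (normSq_gS_le L Λ t) (by positivity)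
      _ = (Λ : ℝ) := by field_simp

lemma integral_exp_k (L : ℝ) (hL : 0 < L) (k : ℤ) :
    ∫ t in (-(L/2))..(L/2), Complex.exp (2 * Real.pi * Complex.I * (k : ℂ) * (t : ℂ) / (L : ℂ))
      = if k = 0 then (L : ℂ) else 0 := by
  rcases eq_or_ne k 0 with hk | hk
  · rw [if_pos hk, hk]
    simp only [Int.cast_zero, mul_zero, zero_mul, zero_div, Complex.exp_zero]
    rw [intervalIntegral.integral_const]
    push_cast
    ring_nf
    simp
  · rw [if_neg hk]
    have hLne : (L : ℂ) ≠ 0 := by exact_mod_cast hL.ne'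
    set c : ℂ := 2 * Real.pi * Complex.I * (k : ℂ) / (L : ℂ) with hc
    have hcne : c ≠ 0 := by
      rw [hc]
      apply div_ne_zero _ hLne
      apply mul_ne_zero (mul_ne_zero (by norm_num [Complex.ofReal_ne_zero, Real.pi_ne_zero]) Complex.I_ne_zero)
      exact_mod_cast hk
    rw [intervalIntegral.integral_congr (g := fun t : ℝ => Complex.exp (c * t))
        (fun t _ => by rw [hc]; norm_num; ring)]
    rw [integral_exp_mul_complex hcne]
    have h1 : c * ((L/2 : ℝ) : ℂ) = ((Real.pi * k : ℝ) : ℂ) * Complex.I := by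
      rw [hc]; push_cast; field_simp
    have h2 : c * ((-(L/2) : ℝ) : ℂ) = ((-(Real.pi * k) : ℝ) : ℂ) * Complex.I := by
      rw [hc]; push_cast; field_simp
    have hsin : Real.sin (Real.pi * k) = 0 := by rw [mul_comm]; exact Real.sin_int_mul_pi k
    have h3 : Complex.exp (c * ((L/2 : ℝ) : ℂ)) - Complex.exp (c * ((-(L/2) : ℝ) : ℂ)) = 0 := by
      rw [h1, h2, Complex.exp_mul_I, Complex.exp_mul_I, ← Complex.ofReal_cos,
        ← Complex.ofReal_sin, ← Complex.ofReal_cos, ← Complex.ofReal_sin,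
        Real.cos_neg, Real.sin_neg, hsin]
      push_cast
      ring
    rw [h3, zero_div]

lemma intInt_exp (L a b : ℝ) (k : ℤ) : IntervalIntegrable
    (fun t : ℝ => Complex.exp (2 * Real.pi * Complex.I * (k : ℂ) * (t : ℂ) / (L : ℂ)))
    volume a b :=
  ((Complex.continuous_exp.comp (by fun_prop))).intervalIntegrable a b

lemma integral_dirichlet (L : ℝ) (hL : 0 < L) (n : ℕ) :
    ∫ t in (-(L/2))..(L/2), dirichletSum L n t = (L : ℂ) := by
  unfold dirichletSum
  rw [intervalIntegral.integral_finset_sum (fun k _ => intInt_exp L _ _ k)]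
  rw [Finset.sum_congr rfl (fun k (_ : k ∈ Finset.Icc (-(n:ℤ)) (n:ℤ)) => integral_exp_k L hL k)]
  simp

lemma integral_g1 (L : ℝ) (hL : 0 < L) (Λ : ℕ) (hΛ : 0 < Λ) :
    ∫ t in Set.Icc (-(L/2)) (L/2), g1 L Λ t = L := by
  have hC : ∫ t in (-(L/2))..(L/2), ((Complex.normSq (gS L Λ t) : ℝ) : ℂ)
      = (((Λ : ℝ) * L : ℝ) : ℂ) := by
    have hpt : (fun t : ℝ => ((Complex.normSq (gS L Λ t) : ℝ) : ℂ))
        = fun t => ∑ n ∈ Finset.range Λ, dirichletSum L n t :=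
      funext fun t => (sum_dirichlet_eq L Λ t).symm
    rw [hpt]
    have hii : ∀ n ∈ Finset.range Λ, IntervalIntegrable (fun t => dirichletSum L n t)
        volume (-(L/2)) (L/2) := by
      intro n _
      apply Continuous.intervalIntegrable
      unfold dirichletSum
      exact continuous_finset_sum _ (fun k _ => Complex.continuous_exp.comp (by fun_prop))
    rw [intervalIntegral.integral_finset_sum hii]
    rw [Finset.sum_congr rfl (fun n (_ : n ∈ Finset.range Λ) => integral_dirichlet L hL n)]
    push_cast
    simp [mul_comm]
  rw [intervalIntegral.integral_ofReal] at hC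
  have hreal : ∫ t in (-(L/2))..(L/2), (Complex.normSq (gS L Λ t) : ℝ) = (Λ : ℝ) * L := by
    exact_mod_cast hC
  have hab : (-(L/2) : ℝ) ≤ L/2 := by linarith
  rw [MeasureTheory.integral_Icc_eq_integral_Ioc, ← intervalIntegral.integral_of_le hab]
  unfold g1
  rw [intervalIntegral.integral_const_mul, hreal]
  have : (Λ:ℝ) ≠ 0 := by positivity
  field_simp

lemma g1_tail (L : ℝ) (hL : 0 < L) (Λ : ℕ) (hΛ : 0 < Λ) (δ t : ℝ) (hδ : 0 < δ)
    (ht1 : δ ≤ |t|) (ht2 : |t| ≤ L/2) :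
    g1 L Λ t ≤ L^2 / (4 * Λ * δ^2) := by
  set u : ℂ := Complex.exp (2 * Real.pi * Complex.I * (t : ℂ) / (L : ℂ)) with hu
  set θ : ℝ := Real.pi * t / L with hθ
  have hexp : u = Complex.exp (((2*θ : ℝ) : ℂ) * Complex.I) := by
    rw [hu, hθ]; congr 1; push_cast; field_simp
  have h4 : u - 1 = ((Real.cos (2*θ) - 1 : ℝ) : ℂ) + ((Real.sin (2*θ) : ℝ) : ℂ) * Complex.I := by
    rw [hexp, Complex.exp_mul_I, ← Complex.ofReal_cos, ← Complex.ofReal_sin]; push_cast; ring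
  have hsub : Complex.normSq (u - 1) = 4 * Real.sin θ ^ 2 := by
    rw [h4, Complex.normSq_add_mul_I]
    have hc : Real.cos (2*θ) = 1 - 2 * Real.sin θ ^ 2 := by
      rw [Real.cos_two_mul]
      nlinarith [Real.sin_sq_add_cos_sq θ]
    nlinarith [Real.sin_sq_add_cos_sq (2*θ)]
  have habs : Real.sin θ ^ 2 = Real.sin (Real.pi * |t| / L) ^ 2 := by
    rcases abs_cases t with ⟨h, _⟩ | ⟨h, _⟩
    · rw [h]
    · rw [h, hθ, show Real.pi * -t / L = -(Real.pi * t / L) by ring, Real.sin_neg]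
      ring
  have hsinlb : 2 * δ / L ≤ Real.sin (Real.pi * |t| / L) := by
    have h1 : Real.pi * |t| / L ≤ Real.pi / 2 := by
      calc Real.pi * |t| / L ≤ Real.pi * (L/2) / L := by gcongr
        _ = Real.pi / 2 := by field_simp
    have h0 : 0 ≤ Real.pi * |t| / L := by positivity
    have hs := Real.mul_le_sin h0 h1
    have hrw : 2 / Real.pi * (Real.pi * |t| / L) = 2 * |t| / L := by
      field_simp
    calc 2 * δ / L ≤ 2 * |t| / L := by gcongr
      _ = 2 / Real.pi * (Real.pi * |t| / L) := hrw.symm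
      _ ≤ _ := hs
  have hδL : 0 < 2 * δ / L := by positivity
  have hsinsq : (2 * δ / L)^2 ≤ Real.sin θ ^ 2 := by
    rw [habs]
    exact pow_le_pow_left₀ hδL.le hsinlb 2
  have hne : u ≠ 1 := by
    intro h
    rw [h] at hsub
    simp at hsub
    nlinarith [hsinsq, hδL, mul_pos hδL hδL, sq_nonneg (Real.sin θ)]
  have hgeom : gS L Λ t = (u ^ Λ - 1) / (u - 1) := by
    rw [gS, ← hu, geom_sum_eq hne]
  have hnorm_u : ‖u‖ = 1 := norm_exp_eq_one L t
  have hnum : ‖u ^ Λ - 1‖ ≤ 2 := by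
    calc ‖u ^ Λ - 1‖ ≤ ‖u ^ Λ‖ + ‖(1:ℂ)‖ := norm_sub_le _ _
      _ = 2 := by rw [norm_pow, hnorm_u]; norm_num
  have hden : 4 * δ / L ≤ ‖u - 1‖ := by
    have hq : ‖u - 1‖^2 = Complex.normSq (u - 1) := by
      rw [Complex.normSq_eq_norm_sq]
    have h1 : (4*δ/L)^2 ≤ ‖u - 1‖^2 := by
      rw [hq, hsub]
      calc (4*δ/L)^2 = 4*(2*δ/L)^2 := by ring
        _ ≤ 4 * Real.sin θ ^ 2 := by linarith
    exact (pow_le_pow_iff_left₀ (by positivity) (norm_nonneg _) two_ne_zero).mp h1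
  have hSnorm : ‖gS L Λ t‖ ≤ 2 / (4 * δ / L) := by
    rw [hgeom, norm_div]
    exact div_le_div₀ (by norm_num) hnum (by positivity) hden
  have hfinal : Complex.normSq (gS L Λ t) ≤ (2 / (4 * δ / L))^2 := by
    rw [Complex.normSq_eq_norm_sq]
    exact pow_le_pow_left₀ (norm_nonneg _) hSnorm 2
  have hrw2 : (Λ:ℝ)⁻¹ * (2 / (4 * δ / L))^2 = L^2 / (4 * Λ * δ^2) := by
    have : (Λ:ℝ) ≠ 0 := by positivity
    field_simp
    ring
  calc g1 L Λ t ≤ (Λ:ℝ)⁻¹ * (2 / (4 * δ / L))^2 := by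
        rw [g1]; gcongr
    _ = _ := hrw2

/-- The rectangular Fejér kernel (as a complex number; it is in fact real-valued):
`F_Λ(x) = Λ^{-m} ∑_{n ∈ {0,…,Λ-1}^m} ∏_{i=1}^m ∑_{k=-n_i}^{n_i} e^{2πi k x_i / L}`. -/
noncomputable def fejerC (L : ℝ) (m Λ : ℕ) (x : Fin m → ℝ) : ℂ :=
  ((Λ : ℂ) ^ m)⁻¹ * ∑ n : Fin m → Fin Λ, ∏ i : Fin m, dirichletSum L (n i) (x i)

/-- The rectangular Fejér kernel as a real-valued function. -/
noncomputable def fejer (L : ℝ) (m Λ : ℕ) (x : Fin m → ℝ) : ℝ := (fejerC L m Λ x).re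

/-- The parameter space `𝒳 = [-L/2, L/2]^m`. -/
def paramBox (L : ℝ) (m : ℕ) : Set (Fin m → ℝ) :=
  Set.univ.pi fun _ : Fin m => Set.Icc (-(L / 2)) (L / 2)


lemma fejer_eq_prod (L : ℝ) (m Λ : ℕ) (x : Fin m → ℝ) :
    fejer L m Λ x = ∏ i, g1 L Λ (x i) := by
  classical
  have h1 : (∑ n : Fin m → Fin Λ, ∏ i, dirichletSum L (n i) (x i))
      = ∏ i, ((Complex.normSq (gS L Λ (x i)) : ℝ) : ℂ) := by
    rw [← Fintype.prod_sum (fun (i : Fin m) (j : Fin Λ) => dirichletSum L (j : ℕ) (x i))]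
    refine Finset.prod_congr rfl fun i _ => ?_
    rw [← sum_dirichlet_eq L Λ (x i)]
    exact (Fin.sum_univ_eq_sum_range (fun n => dirichletSum L n (x i)) Λ)
  rw [fejer, fejerC, h1]
  have h2 : ((Λ:ℂ)^m)⁻¹ * ∏ i, ((Complex.normSq (gS L Λ (x i)) : ℝ) : ℂ)
      = ((∏ i, g1 L Λ (x i) : ℝ) : ℂ) := by
    unfold g1
    rw [Finset.prod_mul_distrib, Finset.prod_const]
    push_cast
    simp [Finset.card_univ]
  rw [h2, Complex.ofReal_re]

lemma fejer_fun_eq (L : ℝ) (m Λ : ℕ) :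
    fejer L m Λ = fun x => ∏ i, g1 L Λ (x i) := funext (fejer_eq_prod L m Λ)

lemma fejer_nonneg (L : ℝ) (m Λ : ℕ) (x : Fin m → ℝ) : 0 ≤ fejer L m Λ x := by
  rw [fejer_eq_prod]
  exact Finset.prod_nonneg fun i _ => g1_nonneg L Λ (x i)

lemma fejer_le (L : ℝ) (m Λ : ℕ) (x : Fin m → ℝ) : fejer L m Λ x ≤ (Λ:ℝ)^m := by
  rw [fejer_eq_prod]
  calc ∏ i, g1 L Λ (x i) ≤ ∏ (_ : Fin m), (Λ:ℝ) :=
        Finset.prod_le_prod (fun i _ => g1_nonneg L Λ (x i)) (fun i _ => g1_le L Λ (x i))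
    _ = (Λ:ℝ)^m := by simp [Finset.prod_const, Finset.card_univ]

lemma fejer_cont (L : ℝ) (m Λ : ℕ) : Continuous (fejer L m Λ) := by
  rw [fejer_fun_eq]
  exact continuous_finset_prod _ fun i _ => (g1_cont L Λ).comp (continuous_apply i)

lemma indicator_pi_prod {m : ℕ} (s : Fin m → Set ℝ) (g : Fin m → ℝ → ℝ) (y : Fin m → ℝ) :
    (Set.pi Set.univ s).indicator (fun y => ∏ i, g i (y i)) y
      = ∏ i, (s i).indicator (g i) (y i) := by
  by_cases h : y ∈ Set.pi Set.univ s
  · rw [Set.indicator_of_mem h]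
    exact Finset.prod_congr rfl fun i _ =>
      (Set.indicator_of_mem (h i (Set.mem_univ i)) _).symm
  · rw [Set.indicator_of_notMem h]
    rw [Set.mem_pi] at h
    push_neg at h
    obtain ⟨i, _, hi⟩ := h
    exact (Finset.prod_eq_zero (Finset.mem_univ i) (Set.indicator_of_notMem hi _)).symm

lemma paramBox_measurable (L : ℝ) (m : ℕ) : MeasurableSet (paramBox L m) :=
  MeasurableSet.univ_pi fun _ => measurableSet_Icc

lemma integral_box_fejer (L : ℝ) (hL : 0 < L) (m Λ : ℕ) (hΛ : 0 < Λ) :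
    ∫ y in paramBox L m, fejer L m Λ y = L^m := by
  rw [← MeasureTheory.integral_indicator (paramBox_measurable L m)]
  have hpt : (paramBox L m).indicator (fejer L m Λ)
      = fun y => ∏ i, (Set.Icc (-(L/2)) (L/2)).indicator (g1 L Λ) (y i) := by
    funext y
    rw [fejer_fun_eq]
    exact indicator_pi_prod (fun _ => Set.Icc (-(L/2)) (L/2)) (fun _ => g1 L Λ) y
  rw [hpt]
  rw [MeasureTheory.volume_pi, MeasureTheory.integral_fintype_prod_eq_prod (ι := Fin m)
    (fun _ => (Set.Icc (-(L/2)) (L/2)).indicator (g1 L Λ))]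
  rw [Finset.prod_congr rfl (fun i (_ : i ∈ Finset.univ) => by
    rw [MeasureTheory.integral_indicator measurableSet_Icc, integral_g1 L hL Λ hΛ])]
  simp [Finset.prod_const, Finset.card_univ]

lemma indicator_g1_integrable (L : ℝ) (Λ : ℕ) (s : Set ℝ)
    (hs : MeasurableSet s) (hsub : s ⊆ Set.Icc (-(L/2)) (L/2)) :
    MeasureTheory.Integrable (s.indicator (g1 L Λ)) := by
  apply MeasureTheory.IntegrableOn.integrable_indicator _ hs
  exact ((g1_cont L Λ).integrableOn_Icc).mono_set hsub

lemma tail_set_measurable (δ : ℝ) : MeasurableSet {t : ℝ | δ ≤ |t|} :=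
  (isClosed_le continuous_const continuous_abs).measurableSet

lemma integral_tail_g1 (L : ℝ) (hL : 0 < L) (Λ : ℕ) (hΛ : 0 < Λ) (δ : ℝ) (hδ : 0 < δ) :
    ∫ t, (Set.Icc (-(L/2)) (L/2) ∩ {t : ℝ | δ ≤ |t|}).indicator (g1 L Λ) t
      ≤ L * (L^2 / (4 * Λ * δ^2)) := by
  set C : ℝ := L^2 / (4 * Λ * δ^2) with hC
  have hC0 : 0 ≤ C := by positivity
  have hpt : ∀ t : ℝ, (Set.Icc (-(L/2)) (L/2) ∩ {t : ℝ | δ ≤ |t|}).indicator (g1 L Λ) t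
      ≤ (Set.Icc (-(L/2)) (L/2)).indicator (fun _ => C) t := by
    intro t
    by_cases h : t ∈ Set.Icc (-(L/2)) (L/2) ∩ {t : ℝ | δ ≤ |t|}
    · rw [Set.indicator_of_mem h, Set.indicator_of_mem h.1]
      obtain ⟨⟨h1, h2⟩, h3⟩ := h
      exact g1_tail L hL Λ hΛ δ t hδ h3 (abs_le.mpr ⟨h1, h2⟩)
    · rw [Set.indicator_of_notMem h]
      exact Set.indicator_nonneg (fun _ _ => hC0) t
  have hint1 : MeasureTheory.Integrable
      ((Set.Icc (-(L/2)) (L/2) ∩ {t : ℝ | δ ≤ |t|}).indicator (g1 L Λ)) :=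
    indicator_g1_integrable L Λ _ (measurableSet_Icc.inter (tail_set_measurable δ))
      Set.inter_subset_left
  have hint2 : MeasureTheory.Integrable
      ((Set.Icc (-(L/2)) (L/2)).indicator (fun _ : ℝ => C)) := by
    apply MeasureTheory.IntegrableOn.integrable_indicator _ measurableSet_Icc
    exact integrableOn_const measure_Icc_lt_top.ne
  calc ∫ t, (Set.Icc (-(L/2)) (L/2) ∩ {t : ℝ | δ ≤ |t|}).indicator (g1 L Λ) t
      ≤ ∫ t, (Set.Icc (-(L/2)) (L/2)).indicator (fun _ => C) t :=
        MeasureTheory.integral_mono hint1 hint2 hpt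
    _ = L * C := by
        rw [MeasureTheory.integral_indicator measurableSet_Icc,
          MeasureTheory.setIntegral_const, measureReal_def, Real.volume_Icc]
        rw [show L/2 - -(L/2) = L by ring, ENNReal.toReal_ofReal hL.le, smul_eq_mul]

lemma integral_nonneg_indicator_g1 (L : ℝ) (Λ : ℕ) (s : Set ℝ) :
    0 ≤ ∫ t, s.indicator (g1 L Λ) t :=
  MeasureTheory.integral_nonneg fun t => Set.indicator_nonneg (fun u _ => g1_nonneg L Λ u) t

lemma integral_box_tail (L : ℝ) (hL : 0 < L) (m Λ : ℕ) (hΛ : 0 < Λ) (hm : 0 < m)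
    (δ : ℝ) (hδ : 0 < δ) (i : Fin m) :
    ∫ y, ((paramBox L m) ∩ {y : Fin m → ℝ | δ ≤ |y i|}).indicator (fejer L m Λ) y
      ≤ L^m * (L^2 / (4 * Λ * δ^2)) := by
  classical
  set Icc1 : Set ℝ := Set.Icc (-(L/2)) (L/2) with hIcc1
  set s : Fin m → Set ℝ := fun j => if j = i then Icc1 ∩ {t : ℝ | δ ≤ |t|} else Icc1 with hs
  have hset : (paramBox L m) ∩ {y : Fin m → ℝ | δ ≤ |y i|} = Set.pi Set.univ s := by
    ext y
    simp only [paramBox, Set.mem_inter_iff, Set.mem_pi, Set.mem_univ, true_implies,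
      Set.mem_setOf_eq, hs]
    constructor
    · rintro ⟨h1, h2⟩ j
      split_ifs with hj
      · exact ⟨h1 j, by rw [hj]; exact h2⟩
      · exact h1 j
    · intro h
      constructor
      · intro j
        have := h j
        split_ifs at this with hj
        · exact this.1
        · exact this
      · have := h i
        simp only [if_pos rfl] at this
        exact this.2
  rw [hset, fejer_fun_eq]
  have hpt : (Set.pi Set.univ s).indicator (fun y : Fin m → ℝ => ∏ j, g1 L Λ (y j))
      = fun y => ∏ j, (s j).indicator (g1 L Λ) (y j) :=
    funext fun y => indicator_pi_prod s (fun _ => g1 L Λ) y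
  rw [hpt]
  rw [MeasureTheory.volume_pi, MeasureTheory.integral_fintype_prod_eq_prod (ι := Fin m)
    (fun j => (s j).indicator (g1 L Λ))]
  rw [← Finset.prod_erase_mul Finset.univ _ (Finset.mem_univ i)]
  have hji : ∀ j ∈ Finset.univ.erase i,
      (∫ t, (s j).indicator (g1 L Λ) t) = L := by
    intro j hj
    have hjne : j ≠ i := (Finset.mem_erase.mp hj).1
    rw [hs]
    simp only [if_neg hjne]
    rw [MeasureTheory.integral_indicator measurableSet_Icc]
    exact integral_g1 L hL Λ hΛ
  rw [Finset.prod_congr rfl hji, Finset.prod_const]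
  have hcard : (Finset.univ.erase i).card = m - 1 := by
    rw [Finset.card_erase_of_mem (Finset.mem_univ i), Finset.card_univ, Fintype.card_fin]
  rw [hcard]
  have hlast : (∫ t, (s i).indicator (g1 L Λ) t) ≤ L * (L^2 / (4 * Λ * δ^2)) := by
    rw [hs]
    simp only [if_pos rfl]
    exact integral_tail_g1 L hL Λ hΛ δ hδ
  calc L^(m-1) * ∫ t, (s i).indicator (g1 L Λ) t
      ≤ L^(m-1) * (L * (L^2 / (4 * Λ * δ^2))) := by
        apply mul_le_mul_of_nonneg_left hlast (by positivity)
    _ = L^m * (L^2 / (4 * Λ * δ^2)) := by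
        rw [← mul_assoc, ← pow_succ, Nat.sub_add_cancel hm]

/-- The Euclidean (`ℓ²`) norm on `ℝ^m`. -/
noncomputable def euclNorm {m : ℕ} (x : Fin m → ℝ) : ℝ :=
  Real.sqrt (∑ i : Fin m, (x i) ^ 2)

/-- `f : ℝ^m → ℝ` is `L`-periodic: `f (x + L eᵢ) = f x` for each standard basis vector `eᵢ`. -/
def LPeriodic (L : ℝ) {m : ℕ} (f : (Fin m → ℝ) → ℝ) : Prop :=
  ∀ (x : Fin m → ℝ) (i : Fin m), f (x + L • (Pi.single i 1 : Fin m → ℝ)) = f x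

/-- `f` is `(ε, η)`-continuous: `|f x − f y| ≤ ε` whenever `‖x − y‖₂ ≤ η`. -/
def EpsEtaContinuous {m : ℕ} (f : (Fin m → ℝ) → ℝ) (ε η : ℝ) : Prop :=
  ∀ x y : Fin m → ℝ, euclNorm (x - y) ≤ η → |f x - f y| ≤ ε

/-- The periodic convolution `(f * F_Λ)(x) = L^{-m} ∫_{𝒳} f(x − y) F_Λ(y) dy`. -/
noncomputable def fejerConv (L : ℝ) (m Λ : ℕ) (f : (Fin m → ℝ) → ℝ) (x : Fin m → ℝ) : ℝ :=
  (L ^ m)⁻¹ * ∫ y in paramBox L m, f (x - y) * fejer L m Λ y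

/-- **Uniform approximation error of the Fejér convolution:** if `f : ℝ^m → ℝ` is `L`-periodic,
`(ε/4, η)`-continuous with `η/√m ≤ L/2`, and `|f| ≤ B/2` everywhere, then for every positive
integer `Λ` and every `x ∈ 𝒳`,
`|(f * F_Λ)(x) − f(x)| ≤ ε/4 + 4 B m² L² / (π² Λ η²)`;
consequently, if `Λ ≥ 16 B m² L² / (π² η² ε)`, then the error is at most `ε/2` uniformly
on `𝒳`. -/
theorem fejer_conv_uniform_approximation (L : ℝ) (hL : 0 < L) (m : ℕ) (hm : 0 < m)
    (f : (Fin m → ℝ) → ℝ) (hmeas : Measurable f)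
    (ε η B : ℝ) (hε : 0 < ε) (hη : 0 < η) (hηL : η / Real.sqrt (m : ℝ) ≤ L / 2)
    (hper : LPeriodic L f) (hcont : EpsEtaContinuous f (ε / 4) η)
    (hbound : ∀ x, |f x| ≤ B / 2) (Λ : ℕ) (hΛ : 0 < Λ) :
    (∀ x ∈ paramBox L m,
      |fejerConv L m Λ f x - f x| ≤
        ε / 4 + 4 * B * (m : ℝ) ^ 2 * L ^ 2 / (Real.pi ^ 2 * (Λ : ℝ) * η ^ 2)) ∧
    (16 * B * (m : ℝ) ^ 2 * L ^ 2 / (Real.pi ^ 2 * η ^ 2 * ε) ≤ (Λ : ℝ) →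
      ∀ x ∈ paramBox L m, |fejerConv L m Λ f x - f x| ≤ ε / 2) := by
  have hmR : (0:ℝ) < m := by exact_mod_cast hm
  have hB : 0 ≤ B := by
    have h1 := hbound 0
    have h2 := abs_nonneg (f 0)
    linarith
  set δ : ℝ := η / Real.sqrt m with hδdef
  have hsqrtm : 0 < Real.sqrt m := Real.sqrt_pos.mpr hmR
  have hδ : 0 < δ := div_pos hη hsqrtm
  have hδ2 : δ^2 = η^2 / m := by
    rw [hδdef, div_pow, Real.sq_sqrt hmR.le]
  set C : ℝ := L^2 / (4 * Λ * δ^2) with hCdef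
  have hC0 : 0 ≤ C := by positivity
  set Fm : (Fin m → ℝ) → ℝ := fejer L m Λ with hFm
  set box : Set (Fin m → ℝ) := paramBox L m with hbox
  have hboxm : MeasurableSet box := paramBox_measurable L m
  have hfin : volume box ≠ ⊤ := by
    have hc : IsCompact box := isCompact_univ_pi fun _ => isCompact_Icc
    exact hc.measure_lt_top.ne
  have hFmcont : Continuous Fm := fejer_cont L m Λ
  have hFm0 : ∀ y, 0 ≤ Fm y := fejer_nonneg L m Λ
  have hFmle : ∀ y, Fm y ≤ (Λ:ℝ)^m := fejer_le L m Λ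
  have hΛR : (0:ℝ) < Λ := by exact_mod_cast hΛ
  have hLm : (0:ℝ) < L^m := by positivity
  -- A_i sets
  set A : Fin m → Set (Fin m → ℝ) := fun i => {y : Fin m → ℝ | δ ≤ |y i|} with hA
  have hAmeas : ∀ i, MeasurableSet (A i) := fun i =>
    (tail_set_measurable δ).preimage (measurable_pi_apply i)
  have hint_Fm : MeasureTheory.IntegrableOn Fm box := by
    apply MeasureTheory.Measure.integrableOn_of_bounded hfin
      hFmcont.aestronglyMeasurable (M := (Λ:ℝ)^m)
    exact MeasureTheory.ae_of_all _ fun y => by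
      rw [Real.norm_eq_abs, abs_of_nonneg (hFm0 y)]; exact hFmle y
  have hIbox : ∫ y in box, Fm y = L^m := integral_box_fejer L hL m Λ hΛ
  have htail : ∀ i, ∫ y in box, (A i).indicator Fm y ≤ L^m * C := by
    intro i
    rw [← MeasureTheory.integral_indicator hboxm, Set.indicator_indicator]
    exact integral_box_tail L hL m Λ hΛ hm δ hδ i
  have htail0 : ∀ i, 0 ≤ ∫ y in box, (A i).indicator Fm y := by
    intro i
    apply MeasureTheory.integral_nonneg
    exact fun y => Set.indicator_nonneg (fun u _ => hFm0 u) y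
  have hint_Ai : ∀ i, MeasureTheory.IntegrableOn ((A i).indicator Fm) box :=
    fun i => hint_Fm.indicator (hAmeas i)
  -- main estimate
  have main : ∀ x ∈ paramBox L m,
      |fejerConv L m Λ f x - f x| ≤ ε / 4 + B * m * C := by
    intro x hx
    have hint_fX : MeasureTheory.IntegrableOn (fun y => f (x - y) * Fm y) box := by
      apply MeasureTheory.Measure.integrableOn_of_bounded hfin
        (((hmeas.comp (measurable_const.sub measurable_id)).mul
          hFmcont.measurable).aestronglyMeasurable) (M := B/2 * (Λ:ℝ)^m)
      apply MeasureTheory.ae_of_all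
      intro y
      rw [Real.norm_eq_abs]; show |f (x - y) * Fm y| ≤ B / 2 * (Λ:ℝ) ^ m; rw [abs_mul, abs_of_nonneg (hFm0 y)]
      apply mul_le_mul (hbound _) (hFmle y) (hFm0 y) (by linarith)
    have hint_diff : MeasureTheory.IntegrableOn
        (fun y => (f (x - y) - f x) * Fm y) box := by
      have heq : (fun y => (f (x - y) - f x) * Fm y)
          = fun y => f (x - y) * Fm y - f x * Fm y := funext fun y => by ring
      rw [heq]
      exact hint_fX.sub (hint_Fm.const_mul (f x))
    have hint_absdiff : MeasureTheory.IntegrableOn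
        (fun y => |f (x - y) - f x| * Fm y) box := by
      have heq : (fun y => |f (x - y) - f x| * Fm y)
          = fun y => |(f (x - y) - f x) * Fm y| := funext fun y => by
        rw [abs_mul, abs_of_nonneg (hFm0 y)]
      rw [heq]
      exact hint_diff.abs
    have hint_sum : MeasureTheory.IntegrableOn
        (fun y => ∑ i, (A i).indicator Fm y) box :=
      MeasureTheory.integrable_finset_sum _ fun i _ => hint_Ai i
    have hint_G : MeasureTheory.IntegrableOn
        (fun y => ε/4 * Fm y + B * ∑ i, (A i).indicator Fm y) box :=
      (hint_Fm.const_mul _).add (hint_sum.const_mul _)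
    -- pointwise bound
    have hptwise : ∀ y ∈ box, |f (x - y) - f x| * Fm y
        ≤ ε/4 * Fm y + B * ∑ i, (A i).indicator Fm y := by
      intro y _
      have hsum0 : 0 ≤ ∑ i, (A i).indicator Fm y :=
        Finset.sum_nonneg fun i _ => Set.indicator_nonneg (fun u _ => hFm0 u) y
      by_cases hnear : euclNorm y ≤ η
      · have hxy : euclNorm ((x - y) - x) ≤ η := by
          have : (x - y) - x = -y := by abel
          rw [this]
          have : euclNorm (-y : Fin m → ℝ) = euclNorm y := by
            unfold euclNorm
            congr 1
            exact Finset.sum_congr rfl fun i _ => by simp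
          rw [this]; exact hnear
        have hc := hcont (x - y) x hxy
        calc |f (x - y) - f x| * Fm y ≤ ε/4 * Fm y :=
              mul_le_mul_of_nonneg_right hc (hFm0 y)
          _ ≤ _ := le_add_of_nonneg_right (mul_nonneg hB hsum0)
      · have hfar : ∃ i, δ ≤ |y i| := by
          by_contra hcon
          push_neg at hcon
          apply hnear
          unfold euclNorm
          have hsumle : ∑ i, (y i)^2 ≤ η^2 := by
            calc ∑ i, (y i)^2 ≤ ∑ (_ : Fin m), δ^2 := by
                  apply Finset.sum_le_sum
                  intro i _
                  calc (y i)^2 = |y i|^2 := (sq_abs _).symm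
                    _ ≤ δ^2 := by
                        apply pow_le_pow_left₀ (abs_nonneg _) (hcon i).le
              _ = m * δ^2 := by simp [Finset.card_univ, mul_comm]
              _ = η^2 := by rw [hδ2]; field_simp
          calc Real.sqrt (∑ i, (y i)^2) ≤ Real.sqrt (η^2) := Real.sqrt_le_sqrt hsumle
            _ = η := Real.sqrt_sq hη.le
        obtain ⟨i, hi⟩ := hfar
        have hindge : Fm y ≤ ∑ j, (A j).indicator Fm y := by
          have hyAi : y ∈ A i := hi
          calc Fm y = (A i).indicator Fm y := (Set.indicator_of_mem hyAi Fm).symm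
            _ ≤ ∑ j, (A j).indicator Fm y := by
                apply Finset.single_le_sum (f := fun j => (A j).indicator Fm y)
                  (fun j _ => Set.indicator_nonneg (fun u _ => hFm0 u) y) (Finset.mem_univ i)
        have hdB : |f (x - y) - f x| ≤ B := by
          calc |f (x - y) - f x| ≤ |f (x - y)| + |f x| := abs_sub _ _
            _ ≤ B/2 + B/2 := add_le_add (hbound _) (hbound _)
            _ = B := by ring
        calc |f (x - y) - f x| * Fm y ≤ B * Fm y :=
              mul_le_mul_of_nonneg_right hdB (hFm0 y)
          _ ≤ B * ∑ j, (A j).indicator Fm y := mul_le_mul_of_nonneg_left hindge hB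
          _ ≤ _ := le_add_of_nonneg_left (mul_nonneg (div_nonneg hε.le (by norm_num)) (hFm0 y))
    -- integral identity
    have hDiffInt : ∫ y in box, (f (x - y) - f x) * Fm y
        = (∫ y in box, f (x - y) * Fm y) - f x * L^m := by
      have heq : (fun y => (f (x - y) - f x) * Fm y)
          = fun y => f (x - y) * Fm y - f x * Fm y := funext fun y => by ring
      rw [heq, MeasureTheory.integral_sub hint_fX (hint_Fm.const_mul (f x)),
        MeasureTheory.integral_const_mul, hIbox]
    have herrEq : fejerConv L m Λ f x - f x
        = (L^m)⁻¹ * ∫ y in box, (f (x - y) - f x) * Fm y := by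
      rw [fejerConv, hDiffInt]
      field_simp
      ring
    -- chain
    have habs : |∫ y in box, (f (x - y) - f x) * Fm y|
        ≤ ∫ y in box, |f (x - y) - f x| * Fm y := by
      have h0 : ‖∫ y in box, (f (x - y) - f x) * Fm y‖
          ≤ ∫ y in box, ‖(f (x - y) - f x) * Fm y‖ :=
        MeasureTheory.norm_integral_le_integral_norm _
      rw [Real.norm_eq_abs] at h0
      calc |∫ y in box, (f (x - y) - f x) * Fm y|
          ≤ ∫ y in box, ‖(f (x - y) - f x) * Fm y‖ := h0
        _ = ∫ y in box, |f (x - y) - f x| * Fm y := by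
            apply MeasureTheory.integral_congr_ae
            apply MeasureTheory.ae_of_all
            intro y
            show ‖(f (x - y) - f x) * Fm y‖ = |f (x - y) - f x| * Fm y
            rw [Real.norm_eq_abs, abs_mul, abs_of_nonneg (hFm0 y)]
    have hGint : ∫ y in box, (ε/4 * Fm y + B * ∑ i, (A i).indicator Fm y)
        = ε/4 * L^m + B * ∑ i, ∫ y in box, (A i).indicator Fm y := by
      rw [MeasureTheory.integral_add (hint_Fm.const_mul _) (hint_sum.const_mul _),
        MeasureTheory.integral_const_mul, MeasureTheory.integral_const_mul, hIbox,
        MeasureTheory.integral_finset_sum _ (fun i _ => hint_Ai i)]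
    have hsumtail : ∑ i, ∫ y in box, (A i).indicator Fm y ≤ m * (L^m * C) := by
      calc ∑ i, ∫ y in box, (A i).indicator Fm y ≤ ∑ (_ : Fin m), L^m * C :=
            Finset.sum_le_sum fun i _ => htail i
        _ = m * (L^m * C) := by simp [Finset.card_univ, mul_comm]
    have hfinal : |fejerConv L m Λ f x - f x| ≤ (L^m)⁻¹ * (ε/4 * L^m + B * (m * (L^m * C))) := by
      rw [herrEq, abs_mul, abs_of_nonneg (inv_nonneg.mpr hLm.le)]
      apply mul_le_mul_of_nonneg_left _ (inv_nonneg.mpr hLm.le)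
      calc |∫ y in box, (f (x - y) - f x) * Fm y|
          ≤ ∫ y in box, |f (x - y) - f x| * Fm y := habs
        _ ≤ ∫ y in box, (ε/4 * Fm y + B * ∑ i, (A i).indicator Fm y) :=
            MeasureTheory.setIntegral_mono_on hint_absdiff hint_G hboxm hptwise
        _ = ε/4 * L^m + B * ∑ i, ∫ y in box, (A i).indicator Fm y := hGint
        _ ≤ ε/4 * L^m + B * (m * (L^m * C)) := by
            apply add_le_add le_rfl
            exact mul_le_mul_of_nonneg_left hsumtail hB
    calc |fejerConv L m Λ f x - f x|
        ≤ (L^m)⁻¹ * (ε/4 * L^m + B * (m * (L^m * C))) := hfinal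
      _ = ε / 4 + B * m * C := by field_simp
  -- convert the bound
  have hBmC : B * m * C = B * (m:ℝ)^2 * L^2 / (4 * Λ * η^2) := by
    rw [hCdef, hδ2]
    field_simp
  have hbnd : B * m * C ≤ 4 * B * (m:ℝ)^2 * L^2 / (Real.pi^2 * Λ * η^2) := by
    rw [hBmC, div_le_div_iff₀ (by positivity) (by positivity)]
    have hπsq : Real.pi^2 < 16 := by nlinarith [Real.pi_lt_d2, Real.pi_pos]
    nlinarith [mul_nonneg (mul_nonneg (mul_nonneg hB (sq_nonneg (m:ℝ))) (sq_nonneg L))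
      (mul_nonneg hΛR.le (sq_nonneg η)), hπsq]
  have part1 : ∀ x ∈ paramBox L m,
      |fejerConv L m Λ f x - f x| ≤
        ε / 4 + 4 * B * (m : ℝ) ^ 2 * L ^ 2 / (Real.pi ^ 2 * (Λ : ℝ) * η ^ 2) := by
    intro x hx
    calc |fejerConv L m Λ f x - f x| ≤ ε / 4 + B * m * C := main x hx
      _ ≤ _ := by linarith
  refine ⟨part1, fun hΛbig x hx => ?_⟩
  have h1 := part1 x hx
  have h2 : 4 * B * (m : ℝ) ^ 2 * L ^ 2 / (Real.pi ^ 2 * (Λ : ℝ) * η ^ 2) ≤ ε / 4 := by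
    rw [div_le_iff₀ (by positivity : (0:ℝ) < Real.pi ^ 2 * η ^ 2 * ε)] at hΛbig
    rw [div_le_div_iff₀ (by positivity) (by norm_num : (0:ℝ) < 4)]
    nlinarith [hΛbig]
  linarith
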